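/- arXiv:2505.24568 — 2 statements merged into one kernel-verified Lean document; each statement's English description precedes it below -/
import Mathlib

section
/- Let a > 0 and R ≥ 1. For every x with |x| < 1/1000 and every complex number z with |z| = c > 0, the integral ∫_R^{R+1} e^{ixξ} z |ξ|^a dξ has modulus at least (c R^a)/2. In particular, with z = i t₀ - t₀^γ where t₀ satisfies t₀² + t₀^{2γ} = R^{-2a}/10⁴, one has |∫_R^{R+1} e^{ixξ}(i t₀ |ξ|^a - t₀^γ |ξ|^a) dξ| ≥ 1/200. -/
open MeasureTheory intervalIntegral

/-! Factoring out the unimodular constant `e^{ixR}`, the real part of the integral is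
`∫_R^{R+1} cos (x (ξ - R)) ξ^a dξ`; as `|x (ξ - R)| ≤ 1` the cosine is at least `1/2` there, while
`ξ^a ≥ R^a`. The second claim is the first one for `z = i t₀ - t₀^γ`, whose modulus is `R^{-a}/100`. -/

theorem Real.one_half_le_cos_of_abs_le_one {θ : ℝ} (hθ : |θ| ≤ 1) : 1 / 2 ≤ Real.cos θ := by
  nlinarith [Real.one_sub_sq_div_two_le_cos (x := θ), sq_abs θ, abs_nonneg θ]

theorem integral_cos_mul_le_norm_integral_exp_mul {φ : ℝ → ℝ} {u v : ℝ} (x : ℝ)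
    (hφ : IntervalIntegrable φ volume u v) :
    ∫ ξ in u..v, Real.cos (x * (ξ - u)) * φ ξ ≤
      ‖∫ ξ in u..v, Complex.exp (Complex.I * x * ξ) * (φ ξ : ℂ)‖ := by
  set g : ℝ → ℂ := fun ξ => Complex.exp ((x * (ξ - u) : ℝ) * Complex.I) * (φ ξ : ℂ)
  have hrot : ∀ ξ : ℝ, Complex.exp (Complex.I * x * ξ) * (φ ξ : ℂ) =
      Complex.exp ((x * u : ℝ) * Complex.I) * g ξ := by
    intro ξ
    rw [← mul_assoc, ← Complex.exp_add]
    push_cast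
    ring_nf
  have hg : IntervalIntegrable g volume u v :=
    IntervalIntegrable.continuousOn_mul ⟨hφ.1.ofReal, hφ.2.ofReal⟩ (by fun_prop)
  simp_rw [hrot, intervalIntegral.integral_const_mul, norm_mul, Complex.norm_exp_ofReal_mul_I,
    one_mul]
  calc ∫ ξ in u..v, Real.cos (x * (ξ - u)) * φ ξ = RCLike.re (∫ ξ in u..v, g ξ) := by
        rw [← intervalIntegral_re hg]
        congr 1
        ext ξ
        rw [RCLike.re_to_complex, Complex.re_mul_ofReal, Complex.exp_ofReal_mul_I_re]
    _ ≤ ‖∫ ξ in u..v, g ξ‖ := RCLike.re_le_norm _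

theorem half_mul_le_norm_integral_exp_mul_of_monotoneOn {φ : ℝ → ℝ} {u v x : ℝ} (huv : u ≤ v)
    (hφ : MonotoneOn φ (Set.Icc u v)) (hφu : 0 ≤ φ u) (hx : |x| * (v - u) ≤ 1) :
    (v - u) * φ u / 2 ≤ ‖∫ ξ in u..v, Complex.exp (Complex.I * x * ξ) * (φ ξ : ℂ)‖ := by
  have hφi : IntervalIntegrable φ volume u v :=
    (Set.uIcc_of_le huv ▸ hφ).intervalIntegrable
  have hpoint : ∀ ξ ∈ Set.Icc u v, φ u / 2 ≤ Real.cos (x * (ξ - u)) * φ ξ := by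
    intro ξ ⟨huξ, hξv⟩
    have hθ : |x * (ξ - u)| ≤ 1 := by
      rw [abs_mul, abs_of_nonneg (sub_nonneg.2 huξ)]
      nlinarith [abs_nonneg x]
    have hφξ : φ u ≤ φ ξ := hφ ⟨le_rfl, huv⟩ ⟨huξ, hξv⟩ huξ
    nlinarith [Real.one_half_le_cos_of_abs_le_one hθ]
  calc (v - u) * φ u / 2 = ∫ _ in u..v, φ u / 2 := by simp
    _ ≤ ∫ ξ in u..v, Real.cos (x * (ξ - u)) * φ ξ :=
        integral_mono_on huv (by simp) (hφi.continuousOn_mul (by fun_prop)) hpoint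
    _ ≤ _ := integral_cos_mul_le_norm_integral_exp_mul x hφi

theorem norm_mul_rpow_div_two_le_norm_integral_exp_mul_rpow {a R x : ℝ} (ha : 0 ≤ a) (hR : 0 ≤ R)
    (hx : |x| ≤ 1) (z : ℂ) :
    ‖z‖ * R ^ a / 2 ≤ ‖∫ ξ in R..(R + 1),
      Complex.exp (Complex.I * (x : ℂ) * (ξ : ℂ)) * z * ((|ξ| ^ a : ℝ) : ℂ)‖ := by
  have hmono : MonotoneOn (fun ξ : ℝ => |ξ| ^ a) (Set.Icc R (R + 1)) := by
    intro ξ hξ η hη hξη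
    dsimp only
    rw [abs_of_nonneg (hR.trans hξ.1), abs_of_nonneg (hR.trans hη.1)]
    exact Real.rpow_le_rpow (hR.trans hξ.1) hξη ha
  have h := half_mul_le_norm_integral_exp_mul_of_monotoneOn (x := x) (by linarith) hmono
    (by positivity) (by linarith)
  rw [add_sub_cancel_left, one_mul, abs_of_nonneg hR] at h
  simp_rw [mul_right_comm _ z, intervalIntegral.integral_mul_const, norm_mul]
  linarith [mul_le_mul_of_nonneg_right h (norm_nonneg z)]

theorem Complex.norm_I_mul_ofReal_sub_ofReal (t s : ℝ) :
    ‖Complex.I * t - s‖ = √(t ^ 2 + s ^ 2) := by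
  rw [sub_eq_neg_add, ← Complex.ofReal_neg, mul_comm, Complex.norm_add_mul_I, neg_sq, add_comm]

theorem oscillatory_integral_lower_bound_general (a γ x R : ℝ) (ha : 0 < a)
    (hR : 1 ≤ R) (hx : |x| < 1 / 1000) :
    (∀ c : ℝ, 0 < c → ∀ z : ℂ, ‖z‖ = c →
        c * R ^ a / 2 ≤
          ‖∫ ξ in R..(R + 1),
              Complex.exp (Complex.I * (x : ℂ) * (ξ : ℂ)) * z * ((|ξ| ^ a : ℝ) : ℂ)‖) ∧
      ∀ t₀ : ℝ, 0 < t₀ → t₀ ^ 2 + t₀ ^ (2 * γ) = R ^ (-(2 * a)) / 10 ^ 4 →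
        (1 : ℝ) / 200 ≤
          ‖∫ ξ in R..(R + 1),
              Complex.exp (Complex.I * (x : ℂ) * (ξ : ℂ)) *
                (Complex.I * (t₀ : ℂ) * ((|ξ| ^ a : ℝ) : ℂ) -
                  ((t₀ ^ γ : ℝ) : ℂ) * ((|ξ| ^ a : ℝ) : ℂ))‖ := by
  have hR0 : 0 < R := by linarith
  have key := fun z => norm_mul_rpow_div_two_le_norm_integral_exp_mul_rpow (x := x) ha.le hR0.le
    (by linarith) z
  refine ⟨fun c _ z hz => hz ▸ key z, fun t₀ ht₀ ht => ?_⟩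
  have hz : ‖Complex.I * t₀ - ((t₀ ^ γ : ℝ) : ℂ)‖ = R ^ (-a) / 100 := by
    have hsq : t₀ ^ 2 + (t₀ ^ γ) ^ 2 = (R ^ (-a) / 100) ^ 2 := by
      rw [← Real.rpow_mul_natCast ht₀.le, div_pow, ← Real.rpow_mul_natCast hR0.le,
        show γ * ((2 : ℕ) : ℝ) = 2 * γ by push_cast; ring,
        show -a * ((2 : ℕ) : ℝ) = -(2 * a) by push_cast; ring, ht]
      norm_num
    rw [Complex.norm_I_mul_ofReal_sub_ofReal, hsq, Real.sqrt_sq (by positivity)]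
  calc (1 : ℝ) / 200 = ‖Complex.I * t₀ - ((t₀ ^ γ : ℝ) : ℂ)‖ * R ^ a / 2 := by
        rw [hz, div_mul_eq_mul_div, ← Real.rpow_add hR0]; norm_num
    _ ≤ _ := key _
    _ = _ := by congr 1; apply intervalIntegral.integral_congr; intro ξ _; ring

/-- For `a > 0`, `R ≥ 1`, `|x| < 1/1000`, and any complex `z` with `|z| = c > 0`,
`|∫_R^{R+1} e^{ixξ} z |ξ|^a dξ| ≥ c R^a / 2`; in particular, with
`z = i t₀ - t₀^γ` where `t₀² + t₀^{2γ} = R^{-2a}/10⁴`, the integral has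
modulus at least `1/200`. -/
theorem oscillatory_integral_lower_bound (a γ x R : ℝ) (ha : 0 < a) (hγ : 0 < γ)
    (hR : 1 ≤ R) (hx : |x| < 1 / 1000) :
    (∀ c : ℝ, 0 < c → ∀ z : ℂ, ‖z‖ = c →
        c * R ^ a / 2 ≤
          ‖∫ ξ in R..(R + 1),
              Complex.exp (Complex.I * (x : ℂ) * (ξ : ℂ)) * z * ((|ξ| ^ a : ℝ) : ℂ)‖) ∧
      ∀ t₀ : ℝ, 0 < t₀ → t₀ ^ 2 + t₀ ^ (2 * γ) = R ^ (-(2 * a)) / 10 ^ 4 →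
        (1 : ℝ) / 200 ≤
          ‖∫ ξ in R..(R + 1),
              Complex.exp (Complex.I * (x : ℂ) * (ξ : ℂ)) *
                (Complex.I * (t₀ : ℂ) * ((|ξ| ^ a : ℝ) : ℂ) -
                  ((t₀ ^ γ : ℝ) : ℂ) * ((|ξ| ^ a : ℝ) : ℂ))‖ :=
  oscillatory_integral_lower_bound_general a γ x R ha hR hx
end

section
/- Let γ > 0 and a > 0, and let f be a Schwartz function on ℝ such that for almost every x ∈ ℝ, lim_{t→0⁺} t^{-min{1,γ}} (P_{a,γ}^t f(x) - f(x)) = 0, where P_{a,γ}^t f(x) = (1/2π) ∫_ℝ f̂(ξ) e^{ixξ} e^{it|ξ|^a} e^{-t^γ|ξ|^a} dξ. Then f ≡ 0. -/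
open MeasureTheory Filter

/-- The Fourier transform `f̂(ξ) = ∫ f(y) e^{-iξy} dy`. -/
noncomputable def fhat (f : ℝ → ℂ) (ξ : ℝ) : ℂ :=
  ∫ y : ℝ, f y * Complex.exp (-(Complex.I * (ξ : ℂ) * (y : ℂ)))

/-- The Landau type Schrödinger operator
`P_{a,γ}^t f(x) = (1/2π) ∫ f̂(ξ) e^{ixξ} e^{it|ξ|^a} e^{-t^γ|ξ|^a} dξ`. -/
noncomputable def landau (a γ : ℝ) (f : ℝ → ℂ) (t x : ℝ) : ℂ :=
  (1 / (2 * Real.pi)) *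
    ∫ ξ : ℝ, fhat f ξ * Complex.exp (Complex.I * (x : ℂ) * (ξ : ℂ)) *
      Complex.exp (Complex.I * ((t * |ξ| ^ a : ℝ) : ℂ)) *
      Complex.exp (-((t ^ γ * |ξ| ^ a : ℝ) : ℂ))

/-!
On the Fourier side `P_{a,γ}^t` multiplies `f̂(ξ)` by `exp (|ξ|^a (i t - t^γ))`. The quotient
`(exp (|ξ|^a (i t - t^γ)) - 1) / t^{min{1,γ}}` tends to `c_γ |ξ|^a` with `c_γ ∈ {i, i - 1, -1}`,
and it is bounded by `2 |ξ|^a` for `t ≤ 1` because the exponent has nonpositive real part.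
By dominated convergence, `(P_{a,γ}^t f - f) / t^{min{1,γ}}` therefore converges at every point
to the inverse Fourier transform of `c_γ |ξ|^a f̂(ξ)`. If this limit vanishes almost everywhere,
Fourier inversion gives `|ξ|^a f̂(ξ) = 0`, so `f̂` vanishes off the origin and `f = 0`.
-/

open Complex Asymptotics Topology FourierTransform
open scoped SchwartzMap Real

lemma norm_cexp_sub_one_le_of_re_nonpos {z : ℂ} (hz : z.re ≤ 0) : ‖cexp z - 1‖ ≤ ‖z‖ := by
  simpa only [exp_zero, sub_zero, one_mul] using
    (convex_halfSpace_re_le 0).norm_image_sub_le_of_norm_hasDerivWithin_le (C := 1)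
    (f := cexp) (fun w _ => (hasDerivAt_exp w).hasDerivWithinAt)
    (fun w hw => by rw [norm_exp]; exact Real.exp_le_one_iff.mpr hw)
    (show (0 : ℂ).re ≤ 0 by simp) hz

lemma tendsto_cexp_mul_sub_one_div {ι : Type*} {l : Filter ι} {ψ s : ι → ℂ} {c : ℂ}
    (hs : Tendsto s l (𝓝 0)) (hs0 : ∀ᶠ i in l, s i ≠ 0)
    (hψ : Tendsto (fun i => ψ i / s i) l (𝓝 c)) (r : ℂ) :
    Tendsto (fun i => (cexp (r * ψ i) - 1) / s i) l (𝓝 (r * c)) := by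
  have hO : (fun i => r * ψ i) =O[l] s :=
    (isBigO_of_div_tendsto_nhds (hs0.mono fun _ h h' => absurd h' h) c hψ).const_mul_left r
  have hexp : (fun w => cexp w - 1 - w) =o[𝓝 0] fun w => w := by
    simpa using (hasDerivAt_exp 0).isLittleO
  have hrem : (fun i => cexp (r * ψ i) - 1 - r * ψ i) =o[l] s :=
    (hexp.comp_tendsto (by simpa using hO.trans_tendsto hs)).trans_isBigO hO
  rw [← zero_add (r * c)]
  refine (hrem.tendsto_div_nhds_zero.add (hψ.const_mul r)).congr' ?_
  filter_upwards [hs0] with i hi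
  field_simp
  ring

lemma tendsto_rpow_nhdsGT_zero {e : ℝ} (he : 0 ≤ e) :
    Tendsto (fun t : ℝ => t ^ e) (𝓝[>] 0) (𝓝 ((0 : ℝ) ^ e)) :=
  (Real.continuousAt_rpow_const 0 e (.inr he)).tendsto.mono_left nhdsWithin_le_nhds

section Fourier

variable {V E : Type*} [NormedAddCommGroup V] [InnerProductSpace ℝ V]
  [MeasurableSpace V] [BorelSpace V] [FiniteDimensional ℝ V]
  [NormedAddCommGroup E] [NormedSpace ℂ E]

lemma fourier_ae_eq_zero_of_fourierInv {H : V → E} (h : 𝓕⁻ H =ᵐ[volume] 0) :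
    𝓕 H =ᵐ[volume] 0 := by
  filter_upwards [(Measure.measurePreserving_neg volume).quasiMeasurePreserving.ae_eq_comp h]
    with w hw
  simpa [Real.fourierInv_eq_fourier_neg] using hw

lemma eq_zero_of_fourier_ae_eq_zero [CompleteSpace E] {H : V → E} (hH : Integrable H)
    (hc : Continuous H) (h : 𝓕 H =ᵐ[volume] 0) : H = 0 := by
  rw [← hc.fourierInv_fourier_eq hH ((integrable_zero V E volume).congr h.symm)]
  ext v
  simp [Real.fourierInv_congr_ae h v, Real.fourierInv_eq]

lemma eq_zero_of_fourierInv_ae_eq_zero [CompleteSpace E] {H : V → E} (hH : Integrable H)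
    (hc : Continuous H) (h : 𝓕⁻ H =ᵐ[volume] 0) : H = 0 :=
  eq_zero_of_fourier_ae_eq_zero hH hc (fourier_ae_eq_zero_of_fourierInv h)

lemma integrable_fourierChar_inner_smul {g : V → E} (hg : Integrable g) (w : V) :
    Integrable (fun v => 𝐞 (inner ℝ v w) • g v) := by
  simpa [inner_neg_right] using (Real.fourierIntegral_convergent_iff (-w)).2 hg

lemma fourierInv_smul_sub_div {φ : V → E} {m : V → ℂ} (hmφ : Integrable (fun v => m v • φ v))
    (hφ : Integrable φ) (s : ℂ) (w : V) :
    s⁻¹ • (𝓕⁻ (fun v => m v • φ v) w - 𝓕⁻ φ w) = 𝓕⁻ (fun v => ((m v - 1) / s) • φ v) w := by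
  simp only [Real.fourierInv_eq, ← integral_sub (integrable_fourierChar_inner_smul hmφ w)
    (integrable_fourierChar_inner_smul hφ w), ← integral_smul]
  congr 1
  ext v
  rw [← smul_sub, smul_comm s⁻¹, div_eq_inv_mul, mul_smul, sub_smul, one_smul]

lemma tendsto_fourierInv_of_dominated {ι : Type*} {l : Filter ι} [l.IsCountablyGenerated]
    {g : ι → V → E} {g₀ : V → E} (bound : V → ℝ)
    (hg_meas : ∀ᶠ i in l, AEStronglyMeasurable (g i))
    (h_bound : ∀ᶠ i in l, ∀ᵐ v, ‖g i v‖ ≤ bound v) (bound_integrable : Integrable bound)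
    (h_lim : ∀ᵐ v, Tendsto (fun i => g i v) l (𝓝 (g₀ v))) (w : V) :
    Tendsto (fun i => 𝓕⁻ (g i) w) l (𝓝 (𝓕⁻ g₀ w)) := by
  simp only [Real.fourierInv_eq]
  refine tendsto_integral_filter_of_dominated_convergence bound ?_ ?_ bound_integrable ?_
  · filter_upwards [hg_meas] with i hi
    exact (Real.continuous_fourierChar.comp (by fun_prop)).aestronglyMeasurable.smul hi
  · filter_upwards [h_bound] with i hi
    filter_upwards [hi] with v hv
    rwa [Circle.norm_smul]
  · filter_upwards [h_lim] with v hv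
    exact hv.const_smul _

end Fourier

lemma SchwartzMap.integrable_norm_rpow_mul {D F : Type*} [NormedAddCommGroup D] [NormedSpace ℝ D]
    [MeasurableSpace D] [BorelSpace D] [SecondCountableTopology D]
    [NormedAddCommGroup F] [NormedSpace ℝ F] {μ : Measure D} [μ.HasTemperateGrowth]
    (f : 𝓢(D, F)) {a : ℝ} (ha : 0 ≤ a) : Integrable (fun x => ‖x‖ ^ a * ‖f x‖) μ := by
  refine ((f.integrable_pow_mul μ 0).add (f.integrable_pow_mul μ ⌈a⌉₊)).mono'
    ((continuous_norm.rpow_const fun _ => .inr ha).mul f.continuous.norm).aestronglyMeasurable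
    (ae_of_all _ fun x => ?_)
  have hx : ‖x‖ ^ a ≤ 1 + ‖x‖ ^ ⌈a⌉₊ := by
    rcases le_total ‖x‖ 1 with h | h
    · linarith [Real.rpow_le_one (norm_nonneg x) h ha, pow_nonneg (norm_nonneg x) ⌈a⌉₊]
    · rw [← Real.rpow_natCast]
      linarith [Real.rpow_le_rpow_of_exponent_le h (Nat.le_ceil a)]
  rw [Real.norm_of_nonneg (by positivity), Pi.add_apply, pow_zero, one_mul, ← one_add_mul]
  exact mul_le_mul_of_nonneg_right hx (norm_nonneg _)

noncomputable def landauExponent (γ t : ℝ) : ℂ := I * t - ((t ^ γ : ℝ) : ℂ)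

/-- Since `0 ^ 0 = 1`, this is `i` for `γ > 1`, `i - 1` for `γ = 1` and `-1` for `γ < 1`. -/
noncomputable def landauRate (γ : ℝ) : ℂ :=
  I * ((0 : ℝ) ^ (1 - min 1 γ) : ℝ) - ((0 : ℝ) ^ (γ - min 1 γ) : ℝ)

lemma landauRate_ne_zero (γ : ℝ) : landauRate γ ≠ 0 := by
  intro h
  rcases le_total γ 1 with hγ | hγ
  · have := congrArg re h
    simp [landauRate, min_eq_right hγ] at this
  · have := congrArg im h
    simp [landauRate, min_eq_left hγ] at this

lemma cexp_mul_cexp_eq_cexp_landauExponent (γ t r : ℝ) :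
    cexp (I * ((t * r : ℝ) : ℂ)) * cexp (-((t ^ γ * r : ℝ) : ℂ)) =
      cexp (r * landauExponent γ t) := by
  rw [← exp_add, landauExponent]
  push_cast
  ring_nf

lemma re_landauExponent_nonpos (γ : ℝ) {t : ℝ} (ht : 0 ≤ t) : (landauExponent γ t).re ≤ 0 := by
  simpa [landauExponent] using Real.rpow_nonneg ht γ

lemma norm_landauExponent_le (γ : ℝ) {t : ℝ} (ht₀ : 0 < t) (ht₁ : t ≤ 1) :
    ‖landauExponent γ t‖ ≤ 2 * t ^ min 1 γ := by
  have h₁ : t ≤ t ^ min 1 γ := by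
    simpa using Real.rpow_le_rpow_of_exponent_ge ht₀ ht₁ (min_le_left 1 γ)
  have h₂ : t ^ γ ≤ t ^ min 1 γ := Real.rpow_le_rpow_of_exponent_ge ht₀ ht₁ (min_le_right 1 γ)
  calc ‖landauExponent γ t‖ ≤ t + t ^ γ := by
        refine (norm_sub_le _ _).trans_eq ?_
        simp [abs_of_pos ht₀, abs_of_nonneg (Real.rpow_nonneg ht₀.le γ)]
    _ ≤ 2 * t ^ min 1 γ := by linarith

lemma tendsto_landauExponent_div (γ : ℝ) :
    Tendsto (fun t => landauExponent γ t / ((t ^ min 1 γ : ℝ) : ℂ)) (𝓝[>] 0)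
      (𝓝 (landauRate γ)) := by
  have h₁ := tendsto_rpow_nhdsGT_zero (sub_nonneg.2 (min_le_left 1 γ))
  have h₂ := tendsto_rpow_nhdsGT_zero (sub_nonneg.2 (min_le_right 1 γ))
  refine ((h₁.ofReal.const_mul I).sub h₂.ofReal).congr' ?_
  filter_upwards [self_mem_nhdsWithin] with t (ht : 0 < t)
  have hm : ((t ^ min 1 γ : ℝ) : ℂ) ≠ 0 := ofReal_ne_zero.2 (Real.rpow_pos_of_pos ht _).ne'
  simp only [Real.rpow_sub ht, Real.rpow_one, ofReal_div, landauExponent]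
  field_simp

lemma tendsto_landauMultiplier {γ : ℝ} (hγ : 0 < γ) (r : ℝ) :
    Tendsto (fun t => (cexp (r * landauExponent γ t) - 1) / ((t ^ min 1 γ : ℝ) : ℂ)) (𝓝[>] 0)
      (𝓝 (r * landauRate γ)) := by
  refine tendsto_cexp_mul_sub_one_div ?_ ?_ (tendsto_landauExponent_div γ) r
  · simpa [Real.zero_rpow (lt_min one_pos hγ).ne'] using
      (tendsto_rpow_nhdsGT_zero (lt_min one_pos hγ).le).ofReal
  · filter_upwards [self_mem_nhdsWithin] with t (ht : 0 < t)
    exact ofReal_ne_zero.2 (Real.rpow_pos_of_pos ht _).ne'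

lemma norm_landauMultiplier_le (γ : ℝ) {t r : ℝ} (ht₀ : 0 < t) (ht₁ : t ≤ 1) (hr : 0 ≤ r) :
    ‖(cexp (r * landauExponent γ t) - 1) / ((t ^ min 1 γ : ℝ) : ℂ)‖ ≤ 2 * r := by
  have hm : 0 < t ^ min 1 γ := Real.rpow_pos_of_pos ht₀ _
  rw [norm_div, norm_real, Real.norm_of_nonneg hm.le, div_le_iff₀ hm]
  calc ‖cexp (r * landauExponent γ t) - 1‖ ≤ ‖(r : ℂ) * landauExponent γ t‖ := by
        refine norm_cexp_sub_one_le_of_re_nonpos ?_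
        simpa using mul_nonpos_of_nonneg_of_nonpos hr (re_landauExponent_nonpos γ ht₀.le)
    _ ≤ r * (2 * t ^ min 1 γ) := by
        rw [norm_mul, norm_real, Real.norm_of_nonneg hr]
        exact mul_le_mul_of_nonneg_left (norm_landauExponent_le γ ht₀ ht₁) hr
    _ = 2 * r * t ^ min 1 γ := by ring

lemma fhat_two_pi_mul (f : ℝ → ℂ) (v : ℝ) : fhat f (2 * π * v) = 𝓕 f v := by
  rw [fhat, Real.fourier_real_eq_integral_exp_smul]
  congr 1
  ext y
  rw [smul_eq_mul, mul_comm]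
  congr 1
  push_cast
  ring_nf

lemma one_div_two_pi_mul_integral_mul_cexp_eq_fourierInv (G : ℝ → ℂ) (x : ℝ) :
    1 / (2 * (π : ℂ)) * ∫ ξ, G ξ * cexp (I * x * ξ) =
      𝓕⁻ (fun v => G (2 * π * v)) x := by
  have hcv := Measure.integral_comp_mul_left (fun ξ => G ξ * cexp (I * x * ξ)) (2 * π)
  have hexp : ∀ v : ℝ, cexp (↑(2 * π * inner ℝ v x) * I) • G (2 * π * v) =
      G (2 * π * v) * cexp (I * x * ↑(2 * π * v)) := fun v => by
    rw [smul_eq_mul, mul_comm, RCLike.inner_apply, conj_trivial]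
    push_cast
    ring_nf
  rw [Real.fourierInv_eq', integral_congr_ae (ae_of_all _ hexp), hcv,
    abs_of_pos (by positivity), Complex.real_smul]
  push_cast
  ring

lemma landau_eq_fourierInv (a γ : ℝ) (f : ℝ → ℂ) (t x : ℝ) :
    landau a γ f t x =
      𝓕⁻ (fun v => cexp (((|2 * π * v| ^ a : ℝ) : ℂ) * landauExponent γ t) • 𝓕 f v) x := by
  have h := one_div_two_pi_mul_integral_mul_cexp_eq_fourierInv
    (fun ξ => cexp (((|ξ| ^ a : ℝ) : ℂ) * landauExponent γ t) * fhat f ξ) x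
  simp only [fhat_two_pi_mul] at h
  simp only [smul_eq_mul, ← h, landau, mul_assoc _ (cexp (I * _)),
    cexp_mul_cexp_eq_cexp_landauExponent]
  congr 2
  ext ξ
  ring

lemma integrable_abs_two_pi_mul_rpow_mul_fourier (f : 𝓢(ℝ, ℂ)) {a : ℝ} (ha : 0 ≤ a) :
    Integrable (fun v => |2 * π * v| ^ a * ‖𝓕 (f : ℝ → ℂ) v‖) := by
  refine (((𝓕 f).integrable_norm_rpow_mul ha).const_mul ((2 * π) ^ a)).congr
    (ae_of_all _ fun v => ?_)
  simp only [SchwartzMap.fourier_coe, Real.norm_eq_abs, abs_mul, abs_of_pos Real.two_pi_pos,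
    Real.mul_rpow Real.two_pi_pos.le (abs_nonneg v)]
  ring

noncomputable def landauGeneratorFourier (a γ : ℝ) (f : ℝ → ℂ) (v : ℝ) : ℂ :=
  (((|2 * π * v| ^ a : ℝ) : ℂ) * landauRate γ) • 𝓕 f v

lemma continuous_landauGeneratorFourier {a : ℝ} (ha : 0 ≤ a) (γ : ℝ) (f : 𝓢(ℝ, ℂ)) :
    Continuous (landauGeneratorFourier a γ f) := by
  have := (𝓕 f).continuous
  unfold landauGeneratorFourier
  fun_prop (disch := exact ha)

lemma integrable_landauGeneratorFourier {a : ℝ} (ha : 0 ≤ a) (γ : ℝ) (f : 𝓢(ℝ, ℂ)) :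
    Integrable (landauGeneratorFourier a γ f) := by
  refine ((integrable_abs_two_pi_mul_rpow_mul_fourier f ha).mul_const ‖landauRate γ‖).mono'
    (continuous_landauGeneratorFourier ha γ f).aestronglyMeasurable
    (ae_of_all _ fun v => le_of_eq ?_)
  rw [landauGeneratorFourier, norm_smul, norm_mul, norm_real, Real.norm_of_nonneg (by positivity)]
  ring

lemma fourier_ae_eq_zero_of_landauGeneratorFourier_eq_zero {a γ : ℝ} {f : ℝ → ℂ}
    (h : landauGeneratorFourier a γ f = 0) : 𝓕 f =ᵐ[volume] 0 := by
  filter_upwards [Measure.ae_ne volume 0] with v hv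
  have hv' : ((|2 * π * v| ^ a : ℝ) : ℂ) * landauRate γ ≠ 0 :=
    mul_ne_zero (ofReal_ne_zero.2 (Real.rpow_pos_of_pos
      (abs_pos.2 (mul_ne_zero Real.two_pi_pos.ne' hv)) a).ne') (landauRate_ne_zero γ)
  exact (smul_eq_zero.1 (congrFun h v)).resolve_left hv'

lemma landau_sub_div_eq_fourierInv (a γ : ℝ) (f : 𝓢(ℝ, ℂ)) {t : ℝ} (ht : 0 ≤ t) (s : ℂ)
    (x : ℝ) :
    (landau a γ f t x - f x) / s =
      𝓕⁻ (fun v => ((cexp (((|2 * π * v| ^ a : ℝ) : ℂ) * landauExponent γ t) - 1) / s) •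
        𝓕 (f : ℝ → ℂ) v) x := by
  have hF : Integrable (𝓕 (f : ℝ → ℂ)) := (𝓕 f).integrable
  have hmul : Integrable (fun v =>
      cexp (((|2 * π * v| ^ a : ℝ) : ℂ) * landauExponent γ t) • 𝓕 (f : ℝ → ℂ) v) := by
    refine hF.bdd_smul (φ := fun v => cexp (((|2 * π * v| ^ a : ℝ) : ℂ) * landauExponent γ t)) 1
      (Measurable.aestronglyMeasurable (by fun_prop)) (ae_of_all _ fun v => ?_)
    rw [norm_exp, Real.exp_le_one_iff]
    simpa using mul_nonpos_of_nonneg_of_nonpos (by positivity) (re_landauExponent_nonpos γ ht)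
  rw [landau_eq_fourierInv, ← fourierInv_smul_sub_div hmul hF, div_eq_inv_mul, smul_eq_mul,
    ← congrFun (f.continuous.fourierInv_fourier_eq f.integrable hF) x]

lemma tendsto_landau_sub_div {a γ : ℝ} (ha : 0 ≤ a) (hγ : 0 < γ) (f : 𝓢(ℝ, ℂ)) (x : ℝ) :
    Tendsto (fun t => (landau a γ f t x - f x) / ((t ^ min 1 γ : ℝ) : ℂ)) (𝓝[>] 0)
      (𝓝 (𝓕⁻ (landauGeneratorFourier a γ f) x)) := by
  set F : ℝ → ℂ := 𝓕 (f : ℝ → ℂ)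
  set r : ℝ → ℝ := fun v => |2 * π * v| ^ a
  have hF : Continuous F := (𝓕 f).continuous
  have hr : Continuous r := by fun_prop (disch := exact ha)
  have hr₀ (v : ℝ) : 0 ≤ r v := by positivity
  refine (tendsto_fourierInv_of_dominated (fun v => 2 * r v * ‖F v‖)
    (g := fun t v => ((cexp (r v * landauExponent γ t) - 1) / ((t ^ min 1 γ : ℝ) : ℂ)) • F v)
    ?_ ?_ ?_ ?_ x).congr' ?_
  · exact Eventually.of_forall fun t => by fun_prop
  · filter_upwards [Ioc_mem_nhdsGT zero_lt_one] with t ht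
    refine ae_of_all _ fun v => ?_
    rw [norm_smul]
    exact mul_le_mul_of_nonneg_right (norm_landauMultiplier_le γ ht.1 ht.2 (hr₀ v)) (norm_nonneg _)
  · exact ((integrable_abs_two_pi_mul_rpow_mul_fourier f ha).const_mul 2).congr
      (ae_of_all _ fun v => (mul_assoc _ _ _).symm)
  · exact ae_of_all _ fun v => (tendsto_landauMultiplier hγ (r v)).smul_const (F v)
  · filter_upwards [self_mem_nhdsWithin] with t (ht : 0 < t)
    exact (landau_sub_div_eq_fourierInv a γ f ht.le _ x).symm

/-- If `f` is Schwartz and `(P_{a,γ}^t f(x) - f(x))/t^{min{1,γ}} → 0` as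
`t → 0⁺` for a.e. `x`, then `f ≡ 0`. -/
theorem schwartz_rate_rigidity (a γ : ℝ) (ha : 0 < a) (hγ : 0 < γ)
    (f : SchwartzMap ℝ ℂ)
    (h : ∀ᵐ x : ℝ, Tendsto
        (fun t : ℝ => (landau a γ (⇑f) t x - f x) / ((t ^ (min 1 γ) : ℝ) : ℂ))
        (nhdsWithin 0 (Set.Ioi 0)) (nhds 0)) :
    ∀ x : ℝ, f x = 0 := by
  have hgen : landauGeneratorFourier a γ f = 0 := by
    refine eq_zero_of_fourierInv_ae_eq_zero (integrable_landauGeneratorFourier ha.le γ f)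
      (continuous_landauGeneratorFourier ha.le γ f) ?_
    filter_upwards [h] with x hx
    exact tendsto_nhds_unique (tendsto_landau_sub_div ha.le hγ f x) hx
  exact congrFun (eq_zero_of_fourier_ae_eq_zero f.integrable f.continuous
    (fourier_ae_eq_zero_of_landauGeneratorFourier_eq_zero hgen))
end
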